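/- arXiv:2404.16016 — 5 statements merged into one kernel-verified Lean document; each statement's English description precedes it below -/
import Mathlib

section
/- For every positive rational number x, there exists a finite set A of distinct positive integers such that the sum of the reciprocals of the elements of A equals x. -/
/-!
Remove the harmonic number `1 + 1/2 + ⋯ + 1/k` from `x`, with `k` maximal: the remainder `y` is
below `1/(k+1)`. Expand `y` greedily, subtracting the largest unit fraction `1/m ≤ y` at each
step. Every denominator exceeds the previous one, and the numerator strictly decreases: for
`y = p/q` one has `y - 1/m = (pm - q)/(qm)` with `pm - q < p` by maximality of `1/m`.
-/

theorem Rat.num_le_of_mul_eq {q : ℚ} (hq : 0 ≤ q) {n d : ℤ} (hd : 0 < d) (h : q * d = n) :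
    q.num ≤ n := by
  have hqnd : q = Rat.divInt n d := by
    rw [Rat.divInt_eq_div, ← h, mul_div_cancel_right₀ _ (by exact_mod_cast hd.ne')]
  have hden : (q.den : ℤ) ≤ d := Int.le_of_dvd hd (hqnd ▸ Rat.den_dvd n d)
  have : (q.num : ℚ) ≤ n := by
    rw [← Rat.mul_den_eq_num, ← h]
    exact mul_le_mul_of_nonneg_left (by exact_mod_cast hden) hq
  exact_mod_cast this

theorem Rat.num_sub_inv_lt {x : ℚ} {m : ℕ} (hm : 0 < m) (hmx : (m : ℚ)⁻¹ ≤ x)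
    (hxm : x * (m - 1) < 1) : (x - (m : ℚ)⁻¹).num < x.num := by
  have hden : (0 : ℚ) < x.den := by exact_mod_cast x.pos
  have hnum : (x.num : ℚ) = x * x.den := (Rat.mul_den_eq_num x).symm
  have hle : (x - (m : ℚ)⁻¹).num ≤ x.num * m - x.den :=
    Rat.num_le_of_mul_eq (sub_nonneg.2 hmx) (d := x.den * m) (by have := x.pos; positivity)
      (by push_cast; rw [hnum]; field_simp)
  have hlt : (x.num : ℚ) * m - x.den < x.num := by
    rw [hnum]; nlinarith
  exact hle.trans_lt (by exact_mod_cast hlt)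

theorem inv_natCeil_inv_le {x : ℚ} (hx : 0 < x) : ((⌈x⁻¹⌉₊ : ℕ) : ℚ)⁻¹ ≤ x :=
  inv_le_of_inv_le₀ hx (Nat.le_ceil _)

theorem mul_natCeil_inv_sub_one_lt_one {x : ℚ} (hx : 0 < x) : x * (⌈x⁻¹⌉₊ - 1) < 1 := by
  have h := mul_lt_mul_of_pos_left (Nat.ceil_lt_add_one (inv_pos.2 hx).le) hx
  rw [mul_add, mul_inv_cancel₀ hx.ne'] at h
  linarith

theorem exists_finset_sum_inv_eq_of_lt_inv {x : ℚ} {N : ℕ} (hx : 0 ≤ x) (hxN : x < (N : ℚ)⁻¹) :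
    ∃ A : Finset ℕ, (∀ a ∈ A, N < a) ∧ ∑ a ∈ A, (a : ℚ)⁻¹ = x := by
  induction hk : x.num.toNat using Nat.strong_induction_on generalizing x N with
  | _ k ih =>
    obtain rfl | hx := hx.eq_or_lt
    · exact ⟨∅, by simp, by simp⟩
    set m := ⌈x⁻¹⌉₊
    have hNm : N < m := by
      have : (N : ℚ) < x⁻¹ := lt_inv_of_lt_inv₀ hx hxN
      exact_mod_cast this.trans_le (Nat.le_ceil _)
    have hy : 0 ≤ x - (m : ℚ)⁻¹ := sub_nonneg.2 (inv_natCeil_inv_le hx)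
    have hm : (0 : ℚ) < m := (inv_pos.2 hx).trans_le (Nat.le_ceil _)
    have hym : x - (m : ℚ)⁻¹ < (m : ℚ)⁻¹ := by
      have hx1 : x < 1 := hxN.trans_le (Nat.cast_inv_le_one N)
      rw [sub_lt_iff_lt_add, ← two_mul, lt_mul_inv_iff₀ hm]
      linarith [mul_natCeil_inv_sub_one_lt_one hx]
    have hnum : (x - (m : ℚ)⁻¹).num.toNat < k := by
      have := Rat.num_sub_inv_lt (Nat.cast_pos.1 hm) (inv_natCeil_inv_le hx)
        (mul_natCeil_inv_sub_one_lt_one hx)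
      have := Rat.num_pos.2 hx
      have := Rat.num_nonneg.2 hy
      omega
    obtain ⟨A, hAm, hAsum⟩ := ih _ hnum hy hym rfl
    refine ⟨insert m A, ?_, ?_⟩
    · simp only [Finset.mem_insert, forall_eq_or_imp]
      exact ⟨hNm, fun a ha => hNm.trans (hAm a ha)⟩
    · rw [Finset.sum_insert fun hmA => (hAm m hmA).false, hAsum, add_sub_cancel]

theorem exists_lt_harmonic (x : ℚ) : ∃ n, x < harmonic n := by
  refine ⟨⌈Real.exp x⌉₊, ?_⟩
  have hlog : (x : ℝ) < Real.log (⌈Real.exp x⌉₊ + 1) := by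
    rw [Real.lt_log_iff_exp_lt (by positivity)]
    exact (Nat.le_ceil _).trans_lt (lt_add_one _)
  have hharm : Real.log (⌈Real.exp x⌉₊ + 1) ≤ harmonic ⌈Real.exp x⌉₊ := by
    exact_mod_cast log_add_one_le_harmonic _
  exact_mod_cast hlog.trans_le hharm

theorem exists_harmonic_le_lt_harmonic_succ {x : ℚ} (hx : 0 ≤ x) :
    ∃ k, harmonic k ≤ x ∧ x < harmonic (k + 1) := by
  classical
  have hex := exists_lt_harmonic x
  obtain ⟨k, hk⟩ : ∃ k, Nat.find hex = k + 1 :=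
    Nat.exists_eq_add_one.2 <| Nat.pos_of_ne_zero fun h => by
      simpa [h, hx.not_gt] using Nat.find_spec hex
  exact ⟨k, not_lt.1 (Nat.find_min hex (by omega)), hk ▸ Nat.find_spec hex⟩

/-- Every positive rational admits an Egyptian fraction representation:
a finite set of distinct positive integers whose reciprocals sum to it. -/
theorem egyptian_fraction_exists (x : ℚ) (hx : 0 < x) :
    ∃ A : Finset ℕ, (∀ a ∈ A, 0 < a) ∧ ∑ a ∈ A, (1 : ℚ) / a = x := by
  obtain ⟨k, hkx, hxk⟩ := exists_harmonic_le_lt_harmonic_succ hx.le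
  have hrem : x - harmonic k < ((k + 1 : ℕ) : ℚ)⁻¹ := by
    rw [harmonic_succ] at hxk; linarith
  obtain ⟨A, hAk, hAsum⟩ := exists_finset_sum_inv_eq_of_lt_inv (sub_nonneg.2 hkx) hrem
  have hdisj : Disjoint (Finset.Icc 1 k) A := Finset.disjoint_left.2 fun a ha haA => by
    have := (Finset.mem_Icc.1 ha).2; have := hAk a haA; omega
  refine ⟨Finset.Icc 1 k ∪ A, fun a ha => ?_, ?_⟩
  · rcases Finset.mem_union.1 ha with ha | ha
    · exact (Finset.mem_Icc.1 ha).1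
    · exact (Nat.succ_pos k).trans (hAk a ha)
  · simp only [one_div]
    rw [Finset.sum_union hdisj, hAsum, ← harmonic_eq_sum_Icc, add_sub_cancel]
end

section
/- Let S be a finite set of positive real numbers and x ≥ 0. Then the number of subsets A ⊆ S with ∑_{s∈A} s ≤ x is at most 2^h, where h is the supremum of ∑_{s∈S} H(p_s) over all families (p_s)_{s∈S} with p_s ∈ [0,1] and ∑_{s∈S} s·p_s ≤ x, and H(p) = -p·log₂ p - (1-p)·log₂(1-p) (with H(0)=H(1)=0). -/
/-!
Let `F` be the family of subsets of `S` with sum at most `x`, and let `p s` be the fraction of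
members of `F` that contain `s`. Then `p` is admissible: `∑ s * p s` is the average over `F` of
the sums of its members. And `log₂ #F ≤ ∑ H(p s)`, the entropy of a uniformly random member of
`F` being at most the sum of the entropies of its membership indicators. The latter is proved by
induction on `S`: splitting `F` according to membership of one element `a`, the grouping rule for
`log₂` costs `H(p a)`, and concavity of `H` controls the mixture of the two halves.
-/

/-- Binary entropy function (base 2), with `H 0 = H 1 = 0` by the
convention `Real.logb 2 0 = 0`. -/
noncomputable def binEnt (p : ℝ) : ℝ :=
  -p * Real.logb 2 p - (1 - p) * Real.logb 2 (1 - p)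

open Finset Real

lemma binEnt_eq_binEntropy_div_log_two (p : ℝ) : binEnt p = binEntropy p / log 2 := by
  simp only [binEnt, binEntropy, logb, log_inv]
  ring

@[simp] lemma binEnt_zero : binEnt 0 = 0 := by simp [binEnt]

@[simp] lemma binEnt_one : binEnt 1 = 0 := by simp [binEnt]

lemma binEnt_le_one (p : ℝ) : binEnt p ≤ 1 := by
  rw [binEnt_eq_binEntropy_div_log_two, div_le_one (log_pos one_lt_two)]
  exact binEntropy_le_log_two

lemma concaveOn_binEnt : ConcaveOn ℝ (Set.Icc 0 1) binEnt := by
  have h : binEnt = fun p => (log 2)⁻¹ • binEntropy p := by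
    ext p
    rw [binEnt_eq_binEntropy_div_log_two, smul_eq_mul, div_eq_inv_mul]
  exact h ▸ strictConcave_binEntropy.concaveOn.smul (inv_nonneg.2 (log_pos one_lt_two).le)

lemma logb_add_eq_binEnt {n₀ n₁ : ℝ} (h₀ : 0 ≤ n₀) (h₁ : 0 ≤ n₁) :
    logb 2 (n₀ + n₁) = n₀ / (n₀ + n₁) * logb 2 n₀ + n₁ / (n₀ + n₁) * logb 2 n₁ +
      binEnt (n₁ / (n₀ + n₁)) := by
  rcases h₀.eq_or_lt with rfl | h₀
  · rcases h₁.eq_or_lt with rfl | h₁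
    · simp
    · simp [h₁.ne']
  rcases h₁.eq_or_lt with rfl | h₁
  · simp [h₀.ne']
  have hn : 0 < n₀ + n₁ := by positivity
  have h₁' : 1 - n₁ / (n₀ + n₁) = n₀ / (n₀ + n₁) := by field_simp; ring
  rw [binEnt, h₁', logb_div h₁.ne' hn.ne', logb_div h₀.ne' hn.ne']
  field_simp
  ring

section

variable {α : Type*}

/-- The invariant of the induction below: unlike `F ⊆ S.powerset`, it passes from `insert a S` to
`S` for each half of `F` split by membership of `a`. -/
def AgreeOutside (S : Finset α) (F : Finset (Finset α)) : Prop :=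
  ∀ s ∉ S, ∀ A ∈ F, ∀ B ∈ F, (s ∈ A ↔ s ∈ B)

lemma AgreeOutside.mono {S : Finset α} {F G : Finset (Finset α)} (h : AgreeOutside S F)
    (hG : G ⊆ F) : AgreeOutside S G :=
  fun s hs A hA B hB => h s hs A (hG hA) B (hG hB)

lemma agreeOutside_of_subset_powerset {S : Finset α} {F : Finset (Finset α)}
    (hF : F ⊆ S.powerset) : AgreeOutside S F := by
  intro s hs A hA B hB
  exact iff_of_false (fun h => hs (mem_powerset.1 (hF hA) h)) fun h => hs (mem_powerset.1 (hF hB) h)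

variable [DecidableEq α]

/-- Equal to `0` when `F` is empty. -/
noncomputable def memberFreq (F : Finset (Finset α)) (s : α) : ℝ :=
  (#{A ∈ F | s ∈ A} : ℝ) / #F

lemma memberFreq_mem_Icc (F : Finset (Finset α)) (s : α) : memberFreq F s ∈ Set.Icc 0 1 :=
  ⟨by unfold memberFreq; positivity,
    div_le_one_of_le₀ (by exact_mod_cast card_filter_le F _) (Nat.cast_nonneg _)⟩

lemma card_div_mul_memberFreq {F G : Finset (Finset α)} (s : α) :
    (#G : ℝ) / #F * memberFreq G s = #{A ∈ G | s ∈ A} / #F := by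
  rcases G.eq_empty_or_nonempty with rfl | hG
  · simp
  have : (#G : ℝ) ≠ 0 := by exact_mod_cast hG.card_pos.ne'
  rw [memberFreq]
  field_simp

lemma memberFreq_eq_mix {F : Finset (Finset α)} (hF : F.Nonempty) (a s : α) :
    memberFreq F s = (1 - memberFreq F a) * memberFreq {A ∈ F | a ∉ A} s +
      memberFreq F a * memberFreq {A ∈ F | a ∈ A} s := by
  have hF' : (#F : ℝ) ≠ 0 := by exact_mod_cast hF.card_pos.ne'
  have hweight : 1 - memberFreq F a = #{A ∈ F | a ∉ A} / #F := by
    rw [memberFreq, eq_div_iff hF', sub_mul, div_mul_cancel₀ _ hF', one_mul, sub_eq_iff_eq_add,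
      ← Nat.cast_add, add_comm, card_filter_add_card_filter_not]
  have hsplit : #{A ∈ F | s ∈ A} =
      #{A ∈ {A ∈ F | a ∉ A} | s ∈ A} + #{A ∈ {A ∈ F | a ∈ A} | s ∈ A} := by
    rw [← card_filter_add_card_filter_not (s := {A ∈ F | s ∈ A}) (p := fun A => a ∈ A),
      add_comm]
    simp only [filter_filter, and_comm]
  rw [hweight, show memberFreq F a = #{A ∈ F | a ∈ A} / #F from rfl, card_div_mul_memberFreq,
    card_div_mul_memberFreq, memberFreq, ← add_div, hsplit, Nat.cast_add]

lemma AgreeOutside.of_insert {S : Finset α} {F : Finset (Finset α)} {a : α}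
    (h : AgreeOutside (insert a S) F) (ha : ∀ A ∈ F, ∀ B ∈ F, (a ∈ A ↔ a ∈ B)) :
    AgreeOutside S F := by
  intro s hs
  rcases eq_or_ne s a with rfl | hsa
  · exact ha
  · exact h s (by simp [hs, hsa])

theorem logb_card_le_sum_binEnt_memberFreq (S : Finset α) (F : Finset (Finset α))
    (hF : AgreeOutside S F) : logb 2 #F ≤ ∑ s ∈ S, binEnt (memberFreq F s) := by
  induction S using Finset.induction_on generalizing F with
  | empty =>
    have : #F ≤ 1 := card_le_one.2 fun A hA B hB => ext fun s => hF s (notMem_empty s) A hA B hB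
    simpa using logb_nonpos one_lt_two (Nat.cast_nonneg _) (by exact_mod_cast this)
  | @insert a S ha ih =>
    rcases F.eq_empty_or_nonempty with rfl | hne
    · simp [memberFreq]
    set F₀ := {A ∈ F | a ∉ A}
    set F₁ := {A ∈ F | a ∈ A}
    have ih₀ := ih F₀ <| (hF.mono (filter_subset _ _)).of_insert <| by simp +contextual
    have ih₁ := ih F₁ <| (hF.mono (filter_subset _ _)).of_insert <| by simp +contextual
    set f := memberFreq F a
    have hf := memberFreq_mem_Icc F a
    have hcard : (#F : ℝ) = #F₀ + #F₁ := by
      rw [← Nat.cast_add, add_comm, card_filter_add_card_filter_not]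
    have hf₁ : f = #F₁ / (#F₀ + #F₁) := by rw [← hcard]; rfl
    have hf₀ : 1 - f = #F₀ / (#F₀ + #F₁) := by
      have : (#F₀ + #F₁ : ℝ) ≠ 0 := by rw [← hcard]; exact_mod_cast hne.card_pos.ne'
      rw [hf₁]
      field_simp
      ring
    calc logb 2 #F = (1 - f) * logb 2 #F₀ + f * logb 2 #F₁ + binEnt f := by
          rw [hf₀, hf₁, hcard]; exact logb_add_eq_binEnt (Nat.cast_nonneg _) (Nat.cast_nonneg _)
      _ ≤ (1 - f) * ∑ s ∈ S, binEnt (memberFreq F₀ s) +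
            f * ∑ s ∈ S, binEnt (memberFreq F₁ s) + binEnt f := by
          gcongr
          · linarith [hf.2]
          · exact hf.1
      _ = ∑ s ∈ S, ((1 - f) * binEnt (memberFreq F₀ s) + f * binEnt (memberFreq F₁ s)) +
            binEnt f := by
          rw [mul_sum, mul_sum, sum_add_distrib]
      _ ≤ ∑ s ∈ S, binEnt (memberFreq F s) + binEnt f := by
          gcongr with s
          rw [memberFreq_eq_mix hne a s]
          exact concaveOn_binEnt.2 (memberFreq_mem_Icc _ _) (memberFreq_mem_Icc _ _)
            (by linarith [hf.2]) hf.1 (by ring)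
      _ = ∑ s ∈ insert a S, binEnt (memberFreq F s) := by rw [sum_insert ha, add_comm]

lemma sum_mul_memberFreq {S : Finset α} {F : Finset (Finset α)} (hF : F ⊆ S.powerset)
    (f : α → ℝ) :
    ∑ s ∈ S, f s * memberFreq F s = (∑ A ∈ F, ∑ s ∈ A, f s) / #F := by
  simp only [memberFreq, ← mul_div_assoc, ← sum_div]
  congr 1
  calc ∑ s ∈ S, f s * #{A ∈ F | s ∈ A} = ∑ s ∈ S, ∑ A ∈ F with s ∈ A, f s := by
        simp [sum_const, mul_comm]
    _ = ∑ A ∈ F, ∑ s ∈ A, f s := sum_comm' fun s A => by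
        have := fun h : A ∈ F => mem_powerset.1 (hF h)
        simp only [mem_filter]
        exact ⟨fun h => ⟨h.2.2, h.2.1⟩, fun h => ⟨this h.2 h.1, h.2, h.1⟩⟩

lemma sum_mul_memberFreq_le {S : Finset α} {F : Finset (Finset α)} (hF : F ⊆ S.powerset)
    (hne : F.Nonempty) {f : α → ℝ} {x : ℝ} (hx : ∀ A ∈ F, ∑ s ∈ A, f s ≤ x) :
    ∑ s ∈ S, f s * memberFreq F s ≤ x := by
  rw [sum_mul_memberFreq hF, div_le_iff₀ (by exact_mod_cast hne.card_pos), mul_comm,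
    ← nsmul_eq_mul]
  exact sum_le_card_nsmul F _ x hx

end

theorem count_subsets_sum_le_entropy_bound_general (S : Finset ℝ) (x : ℝ) :
    (((S.powerset.filter fun A => ∑ s ∈ A, s ≤ x).card : ℝ)) ≤
      2 ^ sSup {t : ℝ | ∃ p : ℝ → ℝ, (∀ s ∈ S, p s ∈ Set.Icc (0:ℝ) 1) ∧
        (∑ s ∈ S, s * p s ≤ x) ∧ t = ∑ s ∈ S, binEnt (p s)} := by
  set F := S.powerset.filter fun A => ∑ s ∈ A, s ≤ x
  rcases F.eq_empty_or_nonempty with hF | hF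
  · rw [hF, card_empty, Nat.cast_zero]
    positivity
  calc (#F : ℝ) = 2 ^ logb 2 #F :=
        (rpow_logb two_pos one_lt_two.ne' (by exact_mod_cast hF.card_pos)).symm
    _ ≤ 2 ^ ∑ s ∈ S, binEnt (memberFreq F s) := rpow_le_rpow_of_exponent_le one_le_two <|
        logb_card_le_sum_binEnt_memberFreq S F <|
          agreeOutside_of_subset_powerset (filter_subset _ _)
    _ ≤ _ := by
      refine rpow_le_rpow_of_exponent_le one_le_two (le_csSup ⟨#S, ?_⟩ ⟨memberFreq F,
        fun s _ => memberFreq_mem_Icc F s,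
        sum_mul_memberFreq_le (filter_subset _ _) hF fun A hA => (mem_filter.1 hA).2, rfl⟩)
      rintro t ⟨p, -, -, rfl⟩
      simpa using sum_le_sum fun s _ => binEnt_le_one (p s)

/-- The number of subsets of a finite set `S` of positive reals summing to at most `x`
is at most `2 ^ h`, where `h` is the supremum of `∑ s ∈ S, H(p s)` over all
`(p_s)` with `p_s ∈ [0,1]` and `∑ s ∈ S, s * p_s ≤ x`. -/
theorem count_subsets_sum_le_entropy_bound (S : Finset ℝ) (hS : ∀ s ∈ S, 0 < s)
    (x : ℝ) (hx : 0 ≤ x) :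
    (((S.powerset.filter fun A => ∑ s ∈ A, s ≤ x).card : ℝ)) ≤
      2 ^ sSup {t : ℝ | ∃ p : ℝ → ℝ, (∀ s ∈ S, p s ∈ Set.Icc (0:ℝ) 1) ∧
        (∑ s ∈ S, s * p s ≤ x) ∧ t = ∑ s ∈ S, binEnt (p s)} :=
  count_subsets_sum_le_entropy_bound_general S x
end

section
/- For every x > 0 there exists a unique real number λ > 0 such that ∫₀¹ 1/(y(1 + e^{λ/y})) dy = x; moreover the map λ ↦ ∫₀¹ 1/(y(1 + e^{λ/y})) dy is strictly decreasing on (0,∞), tends to ∞ as λ → 0⁺, and tends to 0 as λ → ∞. -/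
/-!
For fixed `y ∈ (0,1]` the integrand decreases strictly in `λ` and is bounded by `1/λ`, so by
dominated convergence the integral `F λ` is continuous and strictly decreasing on `(0,∞)`,
and it tends to `0` as `λ → ∞` because the integrand does. On `[λ,1]` we have `λ/y ≤ 1`, so
the integrand is at least `1/((1+e)y)` and `F λ ≥ -log λ/(1+e) → ∞` as `λ → 0⁺`. The
intermediate value theorem and strict monotonicity then give existence and uniqueness.
-/

open intervalIntegral Filter Real Set Topology MeasureTheory

theorem existsUnique_eq_of_strictAntiOn_Ioi {f : ℝ → ℝ} {c x : ℝ}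
    (hcont : ContinuousOn f (Ioi 0)) (hanti : StrictAntiOn f (Ioi 0))
    (hzero : Tendsto f (𝓝[>] 0) atTop) (htop : Tendsto f atTop (𝓝 c)) (hx : c < x) :
    ∃! l, 0 < l ∧ f l = x := by
  obtain ⟨a, hxa, ha⟩ := ((hzero.eventually_gt_atTop x).and self_mem_nhdsWithin).exists
  obtain ⟨b, hbx, hab⟩ := ((htop.eventually_lt_const hx).and (eventually_gt_atTop a)).exists
  have ha : 0 < a := ha
  obtain ⟨l, hl, hfl⟩ := intermediate_value_Icc' hab.le
    (hcont.mono fun t ht => ha.trans_le ht.1) ⟨hbx.le, hxa.le⟩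
  refine ⟨l, ⟨ha.trans_le hl.1, hfl⟩, fun m ⟨hm, hfm⟩ => ?_⟩
  exact hanti.injOn hm (ha.trans_le hl.1) (hfm.trans hfl.symm)

theorem strictAntiOn_intervalIntegral {f : ℝ → ℝ → ℝ} {s : Set ℝ} {a b : ℝ}
    (hab : a < b) (hint : ∀ l ∈ s, IntervalIntegrable (f l) volume a b)
    (hf : ∀ y ∈ Ioc a b, StrictAntiOn (f · y) s) :
    StrictAntiOn (fun l => ∫ y in a..b, f l y) s := by
  intro l hl m hm hlm
  refine integral_lt_integral_of_ae_le_of_measure_setOfPred_lt_ne_zero hab.le (hint m hm)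
    (hint l hl) (ae_restrict_of_forall_mem measurableSet_Ioc fun y hy => (hf y hy hl hm hlm).le)
    ?_
  have hsub : Ioc a b ⊆ {y | f m y < f l y} := fun y hy => hf y hy hl hm hlm
  rw [Measure.restrict_apply' measurableSet_Ioc, inter_eq_self_of_subset_right hsub]
  simp [hab]

/-- `1/(1+eᵗ)` is the Fermi–Dirac function, here taken at `t = l/y` and divided by `y`. -/
noncomputable def fermiKernel (l y : ℝ) : ℝ := 1 / (y * (1 + exp (l / y)))

noncomputable def fermiIntegral (l : ℝ) : ℝ := ∫ y in (0:ℝ)..1, fermiKernel l y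

section fermiKernel

variable {l y : ℝ}

theorem fermiKernel_pos (hy : 0 < y) : 0 < fermiKernel l y := by
  unfold fermiKernel; positivity

theorem strictAnti_fermiKernel (hy : 0 < y) : StrictAnti (fermiKernel · y) := by
  intro a b hab
  apply one_div_lt_one_div_of_lt (by positivity)
  gcongr

theorem continuous_fermiKernel_left (hy : y ≠ 0) : Continuous (fermiKernel · y) := by
  unfold fermiKernel
  exact continuous_const.div (by fun_prop) fun l => mul_ne_zero hy (by positivity)

theorem measurable_fermiKernel (l : ℝ) : Measurable (fermiKernel l) := by
  unfold fermiKernel; fun_prop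

theorem fermiKernel_le_inv (hl : 0 < l) (hy : 0 < y) : fermiKernel l y ≤ l⁻¹ := by
  rw [← one_div]
  apply one_div_le_one_div_of_le hl
  have := add_one_le_exp (l / y)
  calc l = y * (l / y) := by field_simp
    _ ≤ y * (1 + exp (l / y)) := by gcongr; linarith

theorem inv_le_fermiKernel (hy : 0 < y) (hly : l ≤ y) :
    ((1 + exp 1) * y)⁻¹ ≤ fermiKernel l y := by
  rw [← one_div]
  apply one_div_le_one_div_of_le (by positivity)
  have : exp (l / y) ≤ exp 1 := exp_le_exp.2 ((div_le_one hy).2 hly)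
  nlinarith

theorem norm_fermiKernel_le {m : ℝ} (hy : 0 < y) (hml : m ≤ l) :
    ‖fermiKernel l y‖ ≤ fermiKernel m y := by
  rw [Real.norm_of_nonneg (fermiKernel_pos hy).le]
  exact (strictAnti_fermiKernel hy).antitone hml

theorem tendsto_fermiKernel_atTop (hy : 0 < y) : Tendsto (fermiKernel · y) atTop (𝓝 0) := by
  have : Tendsto (fun l => y * (1 + exp (l / y))) atTop atTop :=
    (tendsto_atTop_add_const_left _ 1
      (tendsto_exp_atTop.comp (tendsto_id.atTop_div_const hy))).const_mul_atTop hy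
  exact this.inv_tendsto_atTop.congr fun l => (one_div _).symm

end fermiKernel

theorem intervalIntegrable_fermiKernel {l a b : ℝ} (hl : 0 < l) (ha : 0 ≤ a) (hb : 0 ≤ b) :
    IntervalIntegrable (fermiKernel l) volume a b := by
  refine (intervalIntegrable_const (c := l⁻¹)).mono_fun'
    (measurable_fermiKernel l).aestronglyMeasurable ?_
  refine ae_restrict_of_forall_mem measurableSet_uIoc fun y hy => ?_
  have hy : 0 < y := lt_of_le_of_lt (le_min ha hb) hy.1
  change ‖fermiKernel l y‖ ≤ l⁻¹
  rw [Real.norm_of_nonneg (fermiKernel_pos hy).le]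
  exact fermiKernel_le_inv hl hy

theorem strictAntiOn_fermiIntegral : StrictAntiOn fermiIntegral (Ioi 0) :=
  strictAntiOn_intervalIntegral one_pos
    (fun _ hl => intervalIntegrable_fermiKernel hl le_rfl zero_le_one)
    fun _ hy => (strictAnti_fermiKernel hy.1).strictAntiOn _

theorem continuousOn_fermiIntegral : ContinuousOn fermiIntegral (Ioi 0) := by
  intro l₀ hl₀
  have hl₀ : 0 < l₀ := hl₀
  refine (continuousAt_of_dominated_interval (bound := fermiKernel (l₀ / 2))
    (Eventually.of_forall fun l => (measurable_fermiKernel l).aestronglyMeasurable) ?_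
    (intervalIntegrable_fermiKernel (by positivity) le_rfl zero_le_one) ?_).continuousWithinAt
  · filter_upwards [lt_mem_nhds (half_lt_self hl₀)] with l hl
    exact Eventually.of_forall fun y hy =>
      norm_fermiKernel_le ((uIoc_of_le zero_le_one).subset hy).1 hl.le
  · exact Eventually.of_forall fun y hy =>
      (continuous_fermiKernel_left ((uIoc_of_le zero_le_one).subset hy).1.ne').continuousAt

theorem neg_log_div_le_fermiIntegral {l : ℝ} (hl : 0 < l) (hl₁ : l ≤ 1) :
    -log l / (1 + exp 1) ≤ fermiIntegral l := by
  have hint := intervalIntegrable_fermiKernel hl hl.le zero_le_one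
  have hpos : ∀ y ∈ uIcc l 1, 0 < y := fun y hy => hl.trans_le ((uIcc_of_le hl₁).subset hy).1
  have hint' : IntervalIntegrable (fun y => ((1 + exp 1) * y)⁻¹) volume l 1 :=
    intervalIntegrable_inv (fun y hy => (mul_pos (by positivity) (hpos y hy)).ne')
      (by fun_prop)
  calc -log l / (1 + exp 1) = ∫ y in l..1, ((1 + exp 1) * y)⁻¹ := by
        simp only [mul_inv, intervalIntegral.integral_const_mul,
          integral_inv_of_pos hl one_pos, one_div, log_inv]
        ring
    _ ≤ ∫ y in l..1, fermiKernel l y :=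
        integral_mono_on hl₁ hint' hint fun y hy => inv_le_fermiKernel (hl.trans_le hy.1) hy.1
    _ ≤ fermiIntegral l :=
        integral_mono_interval hl.le hl₁ le_rfl
          (ae_restrict_of_forall_mem measurableSet_Ioc fun y hy => (fermiKernel_pos hy.1).le)
          (intervalIntegrable_fermiKernel hl le_rfl zero_le_one)

theorem tendsto_fermiIntegral_nhdsGT_zero : Tendsto fermiIntegral (𝓝[>] 0) atTop := by
  have hlog : Tendsto (fun l => -log l / (1 + exp 1)) (𝓝[>] 0) atTop :=
    (tendsto_neg_atBot_atTop.comp tendsto_log_nhdsGT_zero).atTop_div_const (by positivity)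
  refine tendsto_atTop_mono' _ ?_ hlog
  filter_upwards [Ioc_mem_nhdsGT one_pos] with l hl
  exact neg_log_div_le_fermiIntegral hl.1 hl.2

theorem tendsto_fermiIntegral_atTop : Tendsto fermiIntegral atTop (𝓝 0) := by
  have := tendsto_integral_filter_of_dominated_convergence (μ := volume) (a := 0) (b := 1)
    (l := atTop) (F := fermiKernel) (f := fun _ => 0) (fermiKernel 1)
    (Eventually.of_forall fun l => (measurable_fermiKernel l).aestronglyMeasurable) ?_
    (intervalIntegrable_fermiKernel one_pos le_rfl zero_le_one) ?_
  · unfold fermiIntegral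
    simpa using this
  · filter_upwards [eventually_ge_atTop 1] with l hl
    exact Eventually.of_forall fun y hy =>
      norm_fermiKernel_le ((uIoc_of_le zero_le_one).subset hy).1 hl
  · exact Eventually.of_forall fun y hy =>
      tendsto_fermiKernel_atTop ((uIoc_of_le zero_le_one).subset hy).1

/-- For every `x > 0` there is a unique `λ > 0` with
`∫₀¹ 1/(y(1+e^{λ/y})) dy = x`; moreover `λ ↦ ∫₀¹ 1/(y(1+e^{λ/y})) dy` is
strictly decreasing on `(0,∞)`, tends to `∞` as `λ → 0⁺` and to `0` as
`λ → ∞`. -/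
theorem lambda_exists_unique :
    (∀ x : ℝ, 0 < x → ∃! l : ℝ, 0 < l ∧
      (∫ y in (0:ℝ)..1, 1 / (y * (1 + Real.exp (l / y)))) = x) ∧
    StrictAntiOn (fun l : ℝ => ∫ y in (0:ℝ)..1, 1 / (y * (1 + Real.exp (l / y))))
      (Set.Ioi 0) ∧
    Tendsto (fun l : ℝ => ∫ y in (0:ℝ)..1, 1 / (y * (1 + Real.exp (l / y))))
      (nhdsWithin 0 (Set.Ioi 0)) atTop ∧
    Tendsto (fun l : ℝ => ∫ y in (0:ℝ)..1, 1 / (y * (1 + Real.exp (l / y))))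
      atTop (nhds 0) :=
  ⟨fun _ hx => existsUnique_eq_of_strictAntiOn_Ioi continuousOn_fermiIntegral
    strictAntiOn_fermiIntegral tendsto_fermiIntegral_nhdsGT_zero tendsto_fermiIntegral_atTop hx,
    strictAntiOn_fermiIntegral, tendsto_fermiIntegral_nhdsGT_zero, tendsto_fermiIntegral_atTop⟩
end

section
/- Let c > 0 and n a positive integer with cn ≥ 1. Then ∑_{m=1}^{n} e^{-cn/m}/m² = Θ(1/(cn)), i.e., there are absolute constants C₁, C₂ > 0 with C₁/(cn) ≤ ∑_{m=1}^{n} e^{-cn/m}/m² ≤ C₂/(cn). -/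
/-!
Write `t = cn`, so that `1 ≤ t ≤ n`. For `m ≥ t/2` the factor `e^{-t/m}` is at least `e^{-2}`,
and `∑_{t/2 ≤ m ≤ n} 1/m² ≥ 1/⌈t/2⌉ - 1/(n+1) ≥ 1/(6t)` by telescoping. Conversely
`y² e^{-y} ≤ 2` with `y = t/m` bounds each of the at most `t` terms with `m ≤ t` by `2/t²`,
and the terms with `m > t` are at most `∑_{m > ⌊t⌋} 1/m² ≤ 2/t`.
-/

open Finset Real

theorem sub_le_sum_Ico_inv_sq {α : Type*} [Field α] [LinearOrder α] [IsStrictOrderedRing α]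
    {k n : ℕ} (hk : k ≠ 0) (h : k ≤ n) :
    (k : α)⁻¹ - (n : α)⁻¹ ≤ ∑ i ∈ Ico k n, ((i : α) ^ 2)⁻¹ := by
  refine Nat.le_induction ?_ ?_ n h
  · simp
  intro n hn IH
  rw [sum_Ico_succ_top hn]
  grw [← IH]
  push_cast
  have A : 0 < (n : α) := by simpa using hk.bot_lt.trans_le hn
  field_simp
  linarith

theorem sq_le_two_mul_exp {y : ℝ} (hy : 0 ≤ y) : y ^ 2 ≤ 2 * exp y := by
  have h := pow_div_factorial_le_exp y hy 2
  norm_num [Nat.factorial] at h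
  linarith

theorem exp_neg_div_div_sq_le {t x : ℝ} (ht : 0 < t) (hx : 0 < x) :
    exp (-t / x) / x ^ 2 ≤ 2 / t ^ 2 := by
  have h := sq_le_two_mul_exp (div_pos ht hx).le
  rw [div_pow, div_le_iff₀ (by positivity)] at h
  rw [div_le_div_iff₀ (by positivity) (by positivity), neg_div, exp_neg]
  calc (exp (t / x))⁻¹ * t ^ 2 ≤ (exp (t / x))⁻¹ * (2 * exp (t / x) * x ^ 2) := by gcongr
    _ = 2 * x ^ 2 := by field_simp

theorem exp_neg_div_div_sq_le_inv_sq {t x : ℝ} (ht : 0 ≤ t) (hx : 0 ≤ x) :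
    exp (-t / x) / x ^ 2 ≤ (x ^ 2)⁻¹ := by
  rw [div_eq_mul_inv]
  refine mul_le_of_le_one_left (by positivity) (exp_le_one_iff.2 ?_)
  exact div_nonpos_of_nonpos_of_nonneg (neg_nonpos.2 ht) hx

theorem exp_neg_two_mul_inv_sq_le {t x : ℝ} (hx : 0 < x) (htx : t ≤ 2 * x) :
    exp (-2) * (x ^ 2)⁻¹ ≤ exp (-t / x) / x ^ 2 := by
  rw [div_eq_mul_inv]
  gcongr
  rw [neg_div, neg_le_neg_iff, div_le_iff₀ hx]
  exact htx

theorem sum_Icc_exp_neg_div_div_sq_le {t : ℝ} (ht : 0 < t) (n : ℕ) :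
    ∑ m ∈ Icc 1 n, exp (-t / m) / (m : ℝ) ^ 2 ≤ 4 / t := by
  set b := ⌊t⌋₊
  have hbt : (b : ℝ) ≤ t := Nat.floor_le ht.le
  have hhead : ∑ m ∈ Icc 1 n with m ≤ b, exp (-t / m) / (m : ℝ) ^ 2 ≤ 2 / t :=
    calc _ ≤ ∑ m ∈ Icc 1 b, exp (-t / m) / (m : ℝ) ^ 2 := by
          refine sum_le_sum_of_subset_of_nonneg (fun m hm => ?_) (fun _ _ _ => by positivity)
          simp only [mem_filter, mem_Icc] at hm ⊢
          exact ⟨hm.1.1, hm.2⟩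
      _ ≤ ∑ m ∈ Icc 1 b, 2 / t ^ 2 := by
          refine sum_le_sum fun m hm => exp_neg_div_div_sq_le ht ?_
          exact_mod_cast (mem_Icc.1 hm).1
      _ ≤ 2 / t := by
          rw [sum_const, Nat.card_Icc, add_tsub_cancel_right, nsmul_eq_mul,
            mul_div_assoc', div_le_div_iff₀ (by positivity) ht]
          nlinarith
  have htail : ∑ m ∈ Icc 1 n with ¬m ≤ b, exp (-t / m) / (m : ℝ) ^ 2 ≤ 2 / t :=
    calc _ ≤ ∑ m ∈ Ioo b (n + 1), exp (-t / m) / (m : ℝ) ^ 2 := by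
          refine sum_le_sum_of_subset_of_nonneg (fun m hm => ?_) (fun _ _ _ => by positivity)
          simp only [mem_filter, mem_Icc, mem_Ioo] at hm ⊢
          omega
      _ ≤ ∑ m ∈ Ioo b (n + 1), ((m : ℝ) ^ 2)⁻¹ :=
          sum_le_sum fun m _ => exp_neg_div_div_sq_le_inv_sq ht.le m.cast_nonneg
      _ ≤ 2 / (b + 1) := sum_Ioo_inv_sq_le b (n + 1)
      _ ≤ 2 / t := by gcongr; exact (Nat.lt_floor_add_one t).le
  rw [← sum_filter_add_sum_filter_not _ (· ≤ b), show 4 / t = 2 / t + 2 / t by ring]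
  exact add_le_add hhead htail

theorem inv_six_mul_le_sum_Icc_ceil_half_inv_sq {t : ℝ} {n : ℕ} (ht : 1 ≤ t) (htn : t ≤ n) :
    (6 * t)⁻¹ ≤ ∑ m ∈ Icc ⌈t / 2⌉₊ n, ((m : ℝ) ^ 2)⁻¹ := by
  set a := ⌈t / 2⌉₊
  have ha : 0 < a := Nat.ceil_pos.2 (by positivity)
  have han : a ≤ n + 1 := by
    have : a ≤ n := Nat.ceil_le.2 (by linarith)
    omega
  have hat : (a : ℝ) < t / 2 + 1 := Nat.ceil_lt_add_one (by positivity)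
  calc (6 * t)⁻¹ ≤ (t / 2 + 1)⁻¹ - (t + 1)⁻¹ := by
        rw [inv_eq_one_div, inv_eq_one_div, inv_eq_one_div, div_sub_div _ _ (by positivity)
          (by positivity), div_le_div_iff₀ (by positivity) (by positivity)]
        nlinarith
    _ ≤ (a : ℝ)⁻¹ - ((n + 1 : ℕ) : ℝ)⁻¹ := by
        gcongr
        push_cast
        linarith
    _ ≤ ∑ m ∈ Icc a n, ((m : ℝ) ^ 2)⁻¹ := by
        rw [← Ico_add_one_right_eq_Icc]
        exact sub_le_sum_Ico_inv_sq ha.ne' han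

theorem le_sum_Icc_exp_neg_div_div_sq {t : ℝ} {n : ℕ} (ht : 1 ≤ t) (htn : t ≤ n) :
    exp (-2) / (6 * t) ≤ ∑ m ∈ Icc 1 n, exp (-t / m) / (m : ℝ) ^ 2 := by
  have ha : 0 < ⌈t / 2⌉₊ := Nat.ceil_pos.2 (by positivity)
  calc exp (-2) / (6 * t) ≤ exp (-2) * ∑ m ∈ Icc ⌈t / 2⌉₊ n, ((m : ℝ) ^ 2)⁻¹ := by
        rw [div_eq_mul_inv]
        gcongr
        exact inv_six_mul_le_sum_Icc_ceil_half_inv_sq ht htn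
    _ ≤ ∑ m ∈ Icc ⌈t / 2⌉₊ n, exp (-t / m) / (m : ℝ) ^ 2 := by
        rw [mul_sum]
        refine sum_le_sum fun m hm => exp_neg_two_mul_inv_sq_le ?_ ?_
        · exact_mod_cast ha.trans_le (mem_Icc.1 hm).1
        · have hm : t / 2 ≤ m := Nat.ceil_le.1 (mem_Icc.1 hm).1
          linarith
    _ ≤ ∑ m ∈ Icc 1 n, exp (-t / m) / (m : ℝ) ^ 2 :=
        sum_le_sum_of_subset_of_nonneg (Icc_subset_Icc_left ha) fun _ _ _ => by positivity

/-- For `c > 0`, `c ≤ 1` and `cn ≥ 1`, `∑_{m=1}^n e^{-cn/m}/m² = Θ(1/(cn))`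
with absolute implied constants. -/
theorem sum_exp_div_sq_theta :
    ∃ C₁ C₂ : ℝ, 0 < C₁ ∧ 0 < C₂ ∧
      ∀ (c : ℝ) (n : ℕ), 0 < c → c ≤ 1 → 1 ≤ c * n →
        C₁ / (c * n) ≤ ∑ m ∈ Finset.Icc 1 n, Real.exp (-(c * n) / m) / (m : ℝ) ^ 2 ∧
        ∑ m ∈ Finset.Icc 1 n, Real.exp (-(c * n) / m) / (m : ℝ) ^ 2 ≤ C₂ / (c * n) := by
  refine ⟨exp (-2) / 6, 4, by positivity, by norm_num, fun c n _ hc1 hcn => ⟨?_, ?_⟩⟩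
  · rw [div_div]
    exact le_sum_Icc_exp_neg_div_div_sq hcn (mul_le_of_le_one_left n.cast_nonneg hc1)
  · exact sum_Icc_exp_neg_div_div_sq_le (by linarith) n
end

section
/- Let c > 0 and n a positive integer with 1 ≤ cn ≤ n. Then ∑_{m=1}^{n} e^{-cn/m}/m³ = O(1/(cn)²), i.e., there is an absolute constant C with ∑_{m=1}^{n} e^{-cn/m}/m³ ≤ C/(cn)². -/
/-!
Since `(1 + t)ⁿ ≤ n! eᵗ` for `t ≥ 0`, putting `t = X/m` with `X = cn` gives
`e^{-X/m}/m³ ≤ 6/(m + X)³`. The latter is at most `3/(m - 1 + X)² - 3/(m + X)²`, so the sum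
telescopes to at most `3/X²`.
-/

open Finset

lemma choose_le_factorial_div (n j : ℕ) :
    (n.choose j : ℝ) ≤ n.factorial / j.factorial := by
  rcases le_or_gt j n with hjn | hnj
  · rw [le_div_iff₀ (by positivity)]
    have h := Nat.choose_mul_factorial_mul_factorial hjn
    exact_mod_cast h ▸ Nat.le_mul_of_pos_right _ (Nat.factorial_pos _)
  · rw [Nat.choose_eq_zero_of_lt hnj, Nat.cast_zero]
    positivity

lemma one_add_pow_le_factorial_mul_exp {t : ℝ} (ht : 0 ≤ t) (n : ℕ) :
    (1 + t) ^ n ≤ n.factorial * Real.exp t :=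
  calc (1 + t) ^ n = ∑ j ∈ range (n + 1), t ^ j * n.choose j := by
        simp only [add_comm 1 t, add_pow, one_pow, mul_one]
    _ ≤ ∑ j ∈ range (n + 1), t ^ j * (n.factorial / j.factorial) := by
        gcongr with j
        exact choose_le_factorial_div n j
    _ = n.factorial * ∑ j ∈ range (n + 1), t ^ j / j.factorial := by
        rw [mul_sum]
        exact sum_congr rfl fun j _ ↦ (mul_div_left_comm _ _ _).symm
    _ ≤ n.factorial * Real.exp t := by
        gcongr
        exact Real.sum_le_exp_of_nonneg ht _

lemma exp_neg_div_div_pow_le {x y : ℝ} (hx : 0 ≤ x) (hy : 0 < y) (n : ℕ) :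
    Real.exp (-x / y) / y ^ n ≤ n.factorial / (y + x) ^ n := by
  have hbound := one_add_pow_le_factorial_mul_exp (div_nonneg hx hy.le) n
  have hyx : (1 + x / y) * y = y + x := by field_simp
  have hkey : Real.exp (-(x / y)) * (1 + x / y) ^ n ≤ n.factorial := by
    rwa [Real.exp_neg, inv_mul_le_iff₀ (Real.exp_pos _), mul_comm]
  calc Real.exp (-x / y) / y ^ n = Real.exp (-(x / y)) * (1 + x / y) ^ n / (y + x) ^ n := by
        rw [← hyx, mul_pow, neg_div]
        field_simp
    _ ≤ n.factorial / (y + x) ^ n := by gcongr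

lemma two_div_pow_three_le_inv_sq_sub {a : ℝ} (ha : 0 < a) :
    2 / (a + 1) ^ 3 ≤ 1 / a ^ 2 - 1 / (a + 1) ^ 2 := by
  rw [div_sub_div _ _ (by positivity) (by positivity), div_le_div_iff₀ (by positivity) (by positivity)]
  nlinarith [pow_pos ha 3, pow_pos ha 4, pow_pos ha 2]

lemma sum_Icc_two_div_add_pow_three_le {x : ℝ} (hx : 0 < x) (N : ℕ) :
    ∑ m ∈ Icc 1 N, 2 / ((m : ℝ) + x) ^ 3 ≤ 1 / x ^ 2 - 1 / (N + x) ^ 2 := by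
  induction N with
  | zero => simp
  | succ k ih =>
    rw [sum_Icc_succ_top (by omega)]
    have hstep := two_div_pow_three_le_inv_sq_sub (a := k + x) (by positivity)
    rw [Nat.cast_succ, add_right_comm]
    linarith

/-- For `c > 0` with `1 ≤ cn ≤ n`, `∑_{m=1}^n e^{-cn/m}/m³ = O(1/(cn)²)`
with an absolute implied constant. -/
theorem sum_exp_div_cube_bigO :
    ∃ C : ℝ, 0 < C ∧
      ∀ (c : ℝ) (n : ℕ), 0 < c → 1 ≤ c * n → c * n ≤ n →
        ∑ m ∈ Finset.Icc 1 n, Real.exp (-(c * n) / m) / (m : ℝ) ^ 3 ≤ C / (c * n) ^ 2 := by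
  refine ⟨3, by norm_num, fun c n _ hcn _ ↦ ?_⟩
  have hX : 0 < c * n := one_pos.trans_le hcn
  calc ∑ m ∈ Icc 1 n, Real.exp (-(c * n) / m) / (m : ℝ) ^ 3
      ≤ ∑ m ∈ Icc 1 n, 3 * (2 / ((m : ℝ) + c * n) ^ 3) := by
        gcongr with m hm_mem
        have hm : (0 : ℝ) < m := by exact_mod_cast (mem_Icc.mp hm_mem).1
        exact (exp_neg_div_div_pow_le hX.le hm 3).trans_eq (by norm_num [Nat.factorial]; ring)
    _ ≤ 3 * (1 / (c * n) ^ 2 - 1 / (n + c * n) ^ 2) := by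
        rw [← mul_sum]
        gcongr
        exact sum_Icc_two_div_add_pow_three_le hX n
    _ ≤ 3 / (c * n) ^ 2 := by
        have : 0 ≤ 1 / ((n : ℝ) + c * n) ^ 2 := by positivity
        linarith [mul_one_div (3 : ℝ) ((c * n) ^ 2)]
end
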